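/- arXiv:math/0607629 — 3 statements merged into one kernel-verified Lean document; each statement's English description precedes it below -/
import Mathlib

section
/- The crossed product multiplication on X = A ⊗ A ⊗ H, defined by (a₁ ⊗ a₁′ ⊗ b¹)(a₂ ⊗ a₂′ ⊗ b²) = Σ a₁(b¹₍₁₎a₂) ⊗ (b¹₍₃₎a₂′)a₁′ ⊗ b¹₍₂₎b², is associative. -/
open TensorProduct

noncomputable section ModuleAlgebraDeligne

universe u

variable (K A H : Type u)

/-- An `H`-module-algebra structure on `A`: an `H`-action by `K`-linear maps making `A`
an `H`-module, such that multiplication and unit of `A` are `H`-linear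
(the Sweedler sum `∑ (b₍₁₎a₁)(b₍₂₎a₂)` is expressed via `Coalgebra.comul`). -/
structure ModAlg [Field K] [Ring A] [Algebra K A] [Ring H] [Bialgebra K H] where
  act : H →ₗ[K] A →ₗ[K] A
  act_one : ∀ a : A, act 1 a = a
  act_mul : ∀ (b c : H) (a : A), act (b * c) a = act b (act c a)
  act_unit : ∀ b : H, act b (1 : A) = (Coalgebra.counit (R := K) b) • (1 : A)
  act_alg : ∀ (b : H) (a₁ a₂ : A),
    act b (a₁ * a₂) =
      LinearMap.mul' K A
        ((TensorProduct.homTensorHomMap (RingHom.id K) A A A A)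
          (TensorProduct.map act act (Coalgebra.comul (R := K) b)) (a₁ ⊗ₜ[K] a₂))

variable [Field K] [Ring A] [Algebra K A] [Ring H] [Bialgebra K H]

/-- The defining formula of the crossed product multiplication on `X = A ⊗ A ⊗ H`:
`(a₁ ⊗ a₁' ⊗ b¹)(a₂ ⊗ a₂' ⊗ b²) = ∑ a₁(b¹₍₁₎a₂) ⊗ (b¹₍₃₎a₂')a₁' ⊗ b¹₍₂₎b²`. -/
def XMulFormula (act : H →ₗ[K] A →ₗ[K] A)
    (mul : (A ⊗[K] (A ⊗[K] H)) →ₗ[K] (A ⊗[K] (A ⊗[K] H)) →ₗ[K] (A ⊗[K] (A ⊗[K] H))) :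
    Prop :=
  ∀ (a₁ a₁' : A) (b₁ : H) (a₂ a₂' : A) (b₂ : H),
    mul (a₁ ⊗ₜ[K] (a₁' ⊗ₜ[K] b₁)) (a₂ ⊗ₜ[K] (a₂' ⊗ₜ[K] b₂)) =
      TensorProduct.map
        (LinearMap.mulLeft K a₁ ∘ₗ act.flip a₂)
        ((TensorProduct.map (LinearMap.mulRight K a₁' ∘ₗ act.flip a₂')
            (LinearMap.mulRight K b₂)) ∘ₗ (TensorProduct.comm K H H).toLinearMap)
        ((LinearMap.lTensor H (Coalgebra.comul (R := K)) ∘ₗ Coalgebra.comul (R := K)) b₁)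

/-- Iterated tensor power `A^{⊗(n+1)}` (so `Tpow K A n` has `n+1` tensor factors),
bundled with its module structure. -/
def TpowAux : ℕ → Σ' (T : Type u) (_ : AddCommGroup T), Module K T
  | 0 => ⟨A, inferInstance, inferInstance⟩
  | n + 1 =>
    letI T := TpowAux n
    letI : AddCommGroup T.1 := T.2.1
    letI : Module K T.1 := T.2.2
    ⟨A ⊗[K] T.1, inferInstance, inferInstance⟩

/-- `Tpow K A n = A^{⊗(n+1)}`. -/
def Tpow (n : ℕ) : Type u := (TpowAux K A n).1

instance instTpowAuxACG (n : ℕ) : AddCommGroup (TpowAux K A n).1 := (TpowAux K A n).2.1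
instance instTpowAuxMod (n : ℕ) : Module K (TpowAux K A n).1 := (TpowAux K A n).2.2
instance (n : ℕ) : AddCommGroup (Tpow K A n) := (TpowAux K A n).2.1
instance (n : ℕ) : Module K (Tpow K A n) := (TpowAux K A n).2.2

/-- Cast between equal tensor powers (identity when `m = n`, junk `0` otherwise). -/
def tmap (m n : ℕ) : Tpow K A m →ₗ[K] Tpow K A n :=
  if h : m = n then by subst h; exact LinearMap.id else 0

/-- Left multiplication by an element of `A` on the first tensor factor. -/
def lmulL : ∀ n : ℕ, A →ₗ[K] Tpow K A n →ₗ[K] Tpow K A n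
  | 0 => LinearMap.mul K A
  | n + 1 =>
    (LinearMap.rTensorHom (R := K) (M := Tpow K A n) (N := A) (P := A)) ∘ₗ
      LinearMap.mul K A

/-- Right multiplication by an element of `A` on the last tensor factor. -/
def rmulL : ∀ n : ℕ, A →ₗ[K] Tpow K A n →ₗ[K] Tpow K A n
  | 0 => (LinearMap.mul K A).flip
  | n + 1 =>
    (LinearMap.lTensorHom (R := K) (M := A) (N := Tpow K A n) (P := Tpow K A n)) ∘ₗ
      rmulL n

/-- Componentwise action of `H^{⊗(n+1)}` on `A^{⊗(n+1)}` induced by an action of `H` on `A`. -/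
def tact (act : H →ₗ[K] A →ₗ[K] A) :
    ∀ n : ℕ, Tpow K H n →ₗ[K] Tpow K A n →ₗ[K] Tpow K A n
  | 0 => act
  | n + 1 =>
    (TensorProduct.homTensorHomMap (RingHom.id K) A (Tpow K A n) A (Tpow K A n)) ∘ₗ
      TensorProduct.map act (tact act n)

/-- Iterated comultiplication `Δⁿ : H → H^{⊗(n+1)}`. -/
def itComul : ∀ n : ℕ, H →ₗ[K] Tpow K H n
  | 0 => LinearMap.id
  | n + 1 => LinearMap.lTensor H (itComul n) ∘ₗ Coalgebra.comul (R := K)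

/-- The action of the pure tensor `a ⊗ a' ⊗ b ∈ X = A ⊗ A ⊗ H` on `A^{⊗(n+1)}`:
`(a ⊗ a' ⊗ b)(a₀ ⊗ ⋯ ⊗ aₙ) = ∑ a b₍₁₎a₀ ⊗ b₍₂₎a₁ ⊗ ⋯ ⊗ b₍ₙ₊₁₎aₙ a'`. -/
def xActP (act : H →ₗ[K] A →ₗ[K] A) (n : ℕ) (a a' : A) (b : H) :
    Tpow K A n →ₗ[K] Tpow K A n :=
  lmulL K A n a ∘ₗ rmulL K A n a' ∘ₗ tact K A H act n (itComul K H n b)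

/-- `X`-linearity (equivariance with respect to all pure tensors of `X = A ⊗ A ⊗ H`)
of a degree-`m` Hopf-Hochschild cochain `g : A^{⊗(m+2)} → A`. -/
def IsXLinear (act : H →ₗ[K] A →ₗ[K] A) (m : ℕ) (g : Tpow K A (m + 1) →ₗ[K] A) : Prop :=
  ∀ (a a' : A) (b : H) (t : Tpow K A (m + 1)),
    g (xActP K A H act (m + 1) a a' b t) = a * act b (g t) * a'

/-- Append an element of `A` as a new last tensor factor. -/
def appendA : ∀ n : ℕ, A →ₗ[K] Tpow K A n →ₗ[K] Tpow K A (n + 1)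
  | 0 => (TensorProduct.mk K A A).flip
  | n + 1 =>
    (LinearMap.lTensorHom (R := K) (M := A) (N := Tpow K A n) (P := Tpow K A (n + 1))) ∘ₗ
      appendA n

/-- The "inner part" `g(1 ⊗ - ⊗ 1) : A^{⊗n} → A` of a cochain `g : A^{⊗(n+2)} → A`. -/
def innerC {n : ℕ} (g : Tpow K A (n + 2) →ₗ[K] A) : Tpow K A n →ₗ[K] A :=
  g ∘ₗ TensorProduct.mk K A (Tpow K A (n + 1)) 1 ∘ₗ appendA K A n 1

/-- Consume the first `n+1` tensor factors of `A^{⊗(S+n+2)}` using a map `A^{⊗(n+1)} → A`,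
leaving the remaining `A^{⊗(S+1)}`. -/
def consume : ∀ n S : ℕ,
    (Tpow K A n →ₗ[K] A) →ₗ[K] (Tpow K A (S + n + 1) →ₗ[K] A ⊗[K] Tpow K A S)
  | 0, S => LinearMap.rTensorHom (R := K) (M := Tpow K A S) (N := A) (P := A)
  | n + 1, S =>
    (TensorProduct.lift.equiv (RingHom.id K) A (Tpow K A (S + n + 1)) (A ⊗[K] Tpow K A S)).toLinearMap ∘ₗ
      (LinearMap.llcomp K A (Tpow K A n →ₗ[K] A)
          (Tpow K A (S + n + 1) →ₗ[K] A ⊗[K] Tpow K A S) (consume n S)) ∘ₗ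
        TensorProduct.lcurry (RingHom.id K) A (Tpow K A n) A

/-- An operadic "entry": a Hopf-Hochschild cochain of degree `m`,
i.e. a linear map `A^{⊗(m+2)} → A`. -/
def Entry : Type u := Σ' m : ℕ, Tpow K A (m + 1) →ₗ[K] A

/-- Total degree of a list of entries. -/
def sumA : List (Entry K A) → ℕ
  | [] => 0
  | e :: l => sumA l + e.1

/-- The block-substitution map underlying the operad structure maps `γ`. -/
def gammaAux : ∀ l : List (Entry K A), Tpow K A (sumA K A l) →ₗ[K] Tpow K A l.length
  | [] => LinearMap.id
  | ⟨0, _⟩ :: _ => 0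
  | ⟨n + 1, g⟩ :: l =>
    LinearMap.lTensor A (gammaAux l) ∘ₗ consume K A n (sumA K A l) (innerC K A g)

/-- The operad structure map `γ(f; g₁, …, g_k)` of the Hopf-Hochschild cochain operad. -/
def gamma (l : List (Entry K A)) (f : Tpow K A (l.length + 1) →ₗ[K] A) :
    Tpow K A (sumA K A l + 1) →ₗ[K] A :=
  f ∘ₗ LinearMap.lTensor A (gammaAux K A l)

/-- `γ(f; g₁, …, g_k)` with degree bookkeeping by casts: `f` has degree `k`,
the result is regarded as a map on `Tpow K A M = A^{⊗(M+1)}`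
(the casts are identities in every intended use, where `l.length = k`
and `M = sumA l + 1`). -/
def gammaD (k : ℕ) (f : Tpow K A (k + 1) →ₗ[K] A) (l : List (Entry K A)) (M : ℕ) :
    Tpow K A M →ₗ[K] A :=
  gamma K A l (f ∘ₗ tmap K A (l.length + 1) (k + 1)) ∘ₗ tmap K A M (sumA K A l + 1)

/-- The identity cochain `Id ∈ C(1)`, `a₀ ⊗ a₁ ⊗ a₂ ↦ a₀a₁a₂`. -/
def idC : Tpow K A 2 →ₗ[K] A :=
  LinearMap.mul' K A ∘ₗ LinearMap.lTensor A (LinearMap.mul' K A)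

/-- `Id` as an entry. -/
def idE : Entry K A := ⟨1, idC K A⟩

/-- The multiplication cochain `π ∈ C(2)`, `a₀ ⊗ a₁ ⊗ a₂ ⊗ a₃ ↦ a₀a₁a₂a₃`. -/
def piC : Tpow K A 3 →ₗ[K] A :=
  LinearMap.mul' K A ∘ₗ
    LinearMap.lTensor A (LinearMap.mul' K A ∘ₗ LinearMap.lTensor A (LinearMap.mul' K A))

/-- The face map `∂ⱼ : A^{⊗(n+2)} → A^{⊗(n+1)}` of the bar complex. -/
def face : ∀ n j : ℕ, Tpow K A (n + 1) →ₗ[K] Tpow K A n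
  | n, 0 => TensorProduct.lift (lmulL K A n)
  | 0, _ + 1 => TensorProduct.lift (lmulL K A 0)
  | n + 1, j + 1 => LinearMap.lTensor A (face n j)

/-- The bar differential `d_n = ∑_{j=0}^n (−1)ʲ ∂ⱼ : A^{⊗(n+2)} → A^{⊗(n+1)}`. -/
def barDiff (n : ℕ) : Tpow K A (n + 1) →ₗ[K] Tpow K A n :=
  ∑ j ∈ Finset.range (n + 1), (-1 : K) ^ j • face K A n j

end ModuleAlgebraDeligne

/-!
Left multiplication by `a ⊗ a' ⊗ b` factors as `L(a, a') ∘ T(b)`, where `L(a, a')` multiplies the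
first factor by `a` on the left and the second by `a'` on the right, and `T` is the action
`b ▷ (p ⊗ p' ⊗ h) = Σ b₍₁₎p ⊗ b₍₃₎p' ⊗ b₍₂₎h`, an algebra map because `Δ` is one.
Associativity says that `x ↦ mul x` is multiplicative, so it suffices that `mul` turns `L(a, a')` and
`T(b)` into left composition with themselves. For `L` this is immediate; for `T` it comes down to
the commutation rule `T(b) ∘ L(a, a') = Σ L(b₍₁₎a, b₍₃₎a') ∘ T(b₍₂₎)`, which is the module-algebra
axiom combined with coassociativity.
-/

open LinearMap

universe u

section MulLeftMulRight

variable {K A H : Type*} [CommSemiring K] [Semiring A] [Algebra K A] [AddCommMonoid H]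
  [Module K H]

def mulLeftMulRight (a a' : A) : Module.End K (A ⊗[K] (A ⊗[K] H)) :=
  map (mulLeft K a) (rTensor H (mulRight K a'))

@[simp]
lemma mulLeftMulRight_tmul (a a' p p' : A) (h : H) :
    mulLeftMulRight (K := K) a a' (p ⊗ₜ (p' ⊗ₜ h)) = (a * p) ⊗ₜ ((p' * a') ⊗ₜ h) :=
  rfl

lemma mulLeftMulRight_mul_mulLeftMulRight (p p' q q' : A) :
    mulLeftMulRight (K := K) (H := H) p p' * mulLeftMulRight q q' =
      mulLeftMulRight (p * q) (q' * p') := by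
  refine TensorProduct.ext_threefold' fun a a' b => ?_
  simp [mul_assoc]

end MulLeftMulRight

namespace ModAlg

variable {K A H : Type u} [Field K] [Ring A] [Algebra K A] [Ring H] [Bialgebra K H]
  (M : ModAlg K A H)

def actAlgHom : H →ₐ[K] Module.End K A :=
  AlgHom.ofLinearMap M.act (LinearMap.ext M.act_one) fun b c => LinearMap.ext (M.act_mul b c)

lemma act_flip_mul (x y : A) :
    M.act.flip (x * y) = mul' K A ∘ₗ map (M.act.flip x) (M.act.flip y) ∘ₗ Coalgebra.comul := by
  ext b
  rw [flip_apply, M.act_alg, comp_apply, comp_apply]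
  induction Coalgebra.comul (R := K) b using TensorProduct.induction_on with
  | zero => simp
  | tmul u v => simp
  | add u v hu hv => simp only [map_add, LinearMap.add_apply, hu, hv]

/-- `c ▷ (p ⊗ h) = Σ c₍₂₎p ⊗ c₍₁₎h`. -/
def twistedAct : H →ₐ[K] Module.End K (A ⊗[K] H) :=
  Module.endTensorEndAlgHom.comp <|
    (Algebra.TensorProduct.map M.actAlgHom (Algebra.lmul K H)).comp <|
      (Algebra.TensorProduct.comm K H H).toAlgHom.comp (Bialgebra.comulAlgHom K H)

/-- `b ▷ (p ⊗ p' ⊗ h) = Σ b₍₁₎p ⊗ b₍₃₎p' ⊗ b₍₂₎h`. -/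
def crossedAct : H →ₐ[K] Module.End K (A ⊗[K] (A ⊗[K] H)) :=
  Module.endTensorEndAlgHom.comp <|
    (Algebra.TensorProduct.map M.actAlgHom M.twistedAct).comp (Bialgebra.comulAlgHom K H)

lemma twistedAct_tmul (b : H) (a : A) (c : H) :
    M.twistedAct b (a ⊗ₜ c) =
      (map (M.act.flip a) (mulRight K c) ∘ₗ (TensorProduct.comm K H H).toLinearMap)
        (Coalgebra.comul b) := by
  simp only [twistedAct, AlgHom.comp_apply, Bialgebra.comulAlgHom_apply]
  induction Coalgebra.comul (R := K) b using TensorProduct.induction_on with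
  | zero => simp
  | tmul x y => simp [actAlgHom, Module.endTensorEndAlgHom_apply]
  | add x y hx hy => simp only [map_add, LinearMap.add_apply, hx, hy]

lemma crossedAct_tmul (b : H) (a a' : A) (c : H) :
    M.crossedAct b (a ⊗ₜ (a' ⊗ₜ c)) =
      map (M.act.flip a)
        (map (M.act.flip a') (mulRight K c) ∘ₗ (TensorProduct.comm K H H).toLinearMap)
        (lTensor H Coalgebra.comul (Coalgebra.comul b)) := by
  simp only [crossedAct, AlgHom.comp_apply, Bialgebra.comulAlgHom_apply]
  induction Coalgebra.comul (R := K) b using TensorProduct.induction_on with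
  | zero => simp
  | tmul x y => simp [actAlgHom, Module.endTensorEndAlgHom_apply, twistedAct_tmul]
  | add x y hx hy => simp only [map_add, LinearMap.add_apply, hx, hy]

lemma commute_crossedAct_lTensor_lTensor_mulRight (b c : H) :
    Commute (M.crossedAct b) (lTensor A (lTensor A (mulRight K c))) := by
  refine TensorProduct.ext_threefold' fun a a' h => ?_
  simp [crossedAct_tmul, ← comp_assoc, lTensor_comp_map]

end ModAlg

namespace XMulFormula

variable {K A H : Type u} [Field K] [Ring A] [Algebra K A] [Ring H] [Bialgebra K H]
  {M : ModAlg K A H}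
  {mul : (A ⊗[K] (A ⊗[K] H)) →ₗ[K] (A ⊗[K] (A ⊗[K] H)) →ₗ[K] (A ⊗[K] (A ⊗[K] H))}
  (hmul : XMulFormula K A H M.act mul)
include hmul

lemma mul_tmul (a a' : A) (b : H) :
    mul (a ⊗ₜ (a' ⊗ₜ b)) = mulLeftMulRight a a' * M.crossedAct b := by
  refine TensorProduct.ext_threefold' fun p p' h => ?_
  have hcomp : map (mulLeft K a ∘ₗ M.act.flip p)
      (map (mulRight K a' ∘ₗ M.act.flip p') (mulRight K h) ∘ₗ
        (TensorProduct.comm K H H).toLinearMap) =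
      mulLeftMulRight a a' ∘ₗ map (M.act.flip p)
        (map (M.act.flip p') (mulRight K h) ∘ₗ (TensorProduct.comm K H H).toLinearMap) := by
    ext; simp
  rw [hmul, hcomp, Module.End.mul_apply, M.crossedAct_tmul]
  rfl

lemma mul_comp_mulLeftMulRight (p p' : A) :
    mul ∘ₗ mulLeftMulRight p p' = LinearMap.mulLeft K (mulLeftMulRight p p') ∘ₗ mul := by
  refine TensorProduct.ext_threefold' fun a a' b => ?_
  rw [comp_apply, comp_apply, mulLeftMulRight_tmul, mulLeft_apply, hmul.mul_tmul, hmul.mul_tmul,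
    ← mul_assoc, mulLeftMulRight_mul_mulLeftMulRight]

lemma mul_comp_lTensor_lTensor_mulRight (c : H) :
    mul ∘ₗ lTensor A (lTensor A (mulRight K c)) =
      LinearMap.mulRight K (M.crossedAct c) ∘ₗ mul := by
  refine TensorProduct.ext_threefold' fun a a' b => ?_
  simp [hmul.mul_tmul, mul_assoc]

lemma mul_crossedAct_tmul_one (b : H) (a a' : A) :
    mul (M.crossedAct b (a ⊗ₜ (a' ⊗ₜ 1))) = M.crossedAct b * mulLeftMulRight a a' := by
  refine TensorProduct.ext_threefold' fun p p' h => ?_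
  rw [Module.End.mul_apply, mulLeftMulRight_tmul, M.crossedAct_tmul, M.crossedAct_tmul,
    M.act_flip_mul, M.act_flip_mul]
  -- Both sides are `W` applied to a bracketing of `Δ⁴ b`, giving
  -- `Σ (b₍₁₎a)(b₍₂₎p) ⊗ (b₍₄₎p')(b₍₅₎a') ⊗ b₍₃₎h`; `σ` moves the legs of the left-hand side into place.
  set W := map (mul' K A ∘ₗ map (M.act.flip a) (M.act.flip p))
    (map (mul' K A ∘ₗ map (M.act.flip p') (M.act.flip a')) (mulRight K h))
  set σ := (TensorProduct.assoc K H H ((H ⊗[K] H) ⊗[K] H)).symm.toLinearMap ∘ₗ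
    lTensor H (lTensor H ((TensorProduct.comm K H (H ⊗[K] H)).toLinearMap ∘ₗ
      (TensorProduct.assoc K H H H).toLinearMap) ∘ₗ
        (TensorProduct.assoc K H (H ⊗[K] H) H).toLinearMap)
  set Δ₂ : H →ₗ[K] H ⊗[K] (H ⊗[K] H) := lTensor H Coalgebra.comul ∘ₗ Coalgebra.comul
  have hL : mul.flip (p ⊗ₜ (p' ⊗ₜ h)) ∘ₗ
      map (M.act.flip a) (map (M.act.flip a') (mulRight K 1) ∘ₗ
        (TensorProduct.comm K H H).toLinearMap) = W ∘ₗ σ ∘ₗ lTensor H (rTensor H Δ₂) := by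
    refine TensorProduct.ext_threefold' fun h₁ h₂ h₃ => ?_
    have hmid : map (mulLeft K (M.act h₁ a) ∘ₗ M.act.flip p)
        (map (mulRight K (M.act h₃ a') ∘ₗ M.act.flip p') (mulRight K h) ∘ₗ
          (TensorProduct.comm K H H).toLinearMap) =
        W ∘ₗ σ ∘ₗ lTensor H ((TensorProduct.mk K (H ⊗[K] (H ⊗[K] H)) H).flip h₃) ∘ₗ
          TensorProduct.mk K H _ h₁ := by
      ext; simp [W, σ]
    simpa using (hmul _ _ _ _ _ _).trans (LinearMap.congr_fun hmid (Δ₂ h₂))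
  have hR : map (mul' K A ∘ₗ map (M.act.flip a) (M.act.flip p) ∘ₗ Coalgebra.comul)
      (map (mul' K A ∘ₗ map (M.act.flip p') (M.act.flip a') ∘ₗ Coalgebra.comul) (mulRight K h) ∘ₗ
        (TensorProduct.comm K H H).toLinearMap) =
      W ∘ₗ map Coalgebra.comul
        (rTensor H Coalgebra.comul ∘ₗ (TensorProduct.comm K H H).toLinearMap) := by
    ext; simp [W]
  have hΔ : σ ∘ₗ lTensor H (rTensor H Δ₂) ∘ₗ Δ₂ =
      map Coalgebra.comul (rTensor H Coalgebra.comul ∘ₗ (TensorProduct.comm K H H).toLinearMap) ∘ₗ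
        Δ₂ := by
    simp only [σ, Δ₂, coassoc_simps]
  rw [hR]
  exact (LinearMap.congr_fun hL (Δ₂ b)).trans congr(W $(LinearMap.congr_fun hΔ b))

lemma mul_comp_crossedAct (b : H) :
    mul ∘ₗ M.crossedAct b = LinearMap.mulLeft K (M.crossedAct b) ∘ₗ mul := by
  refine TensorProduct.ext_threefold' fun a a' c => ?_
  have hc : a ⊗ₜ[K] (a' ⊗ₜ[K] c) = lTensor A (lTensor A (mulRight K c)) (a ⊗ₜ (a' ⊗ₜ 1)) := by
    simp
  rw [comp_apply, comp_apply, mulLeft_apply, hc, ← Module.End.mul_apply,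
    (M.commute_crossedAct_lTensor_lTensor_mulRight b c).eq, Module.End.mul_apply,
    ← comp_apply mul, hmul.mul_comp_lTensor_lTensor_mulRight, comp_apply, mulRight_apply,
    hmul.mul_crossedAct_tmul_one, ← comp_apply mul, hmul.mul_comp_lTensor_lTensor_mulRight,
    comp_apply, mulRight_apply, hmul.mul_tmul, map_one, mul_one, mul_assoc]

lemma mul_mul (x y : A ⊗[K] (A ⊗[K] H)) : mul (mul x y) = mul x * mul y := by
  suffices mul ∘ₗ mul.flip y = LinearMap.mulRight K (mul y) ∘ₗ mul from congr($this x)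
  refine TensorProduct.ext_threefold' fun a a' b => ?_
  rw [comp_apply, flip_apply, hmul.mul_tmul, Module.End.mul_apply, ← comp_apply mul,
    hmul.mul_comp_mulLeftMulRight, comp_apply, mulLeft_apply, ← comp_apply mul,
    hmul.mul_comp_crossedAct, comp_apply, mulLeft_apply, comp_apply, mulRight_apply,
    hmul.mul_tmul, mul_assoc]

end XMulFormula

/-- The crossed product multiplication on `X = A ⊗ A ⊗ H`, defined by
`(a₁ ⊗ a₁′ ⊗ b¹)(a₂ ⊗ a₂′ ⊗ b²) = Σ a₁(b¹₍₁₎a₂) ⊗ (b¹₍₃₎a₂′)a₁′ ⊗ b¹₍₂₎b²`, is associative. -/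
theorem crossed_product_mul_assoc
    {K A H : Type u} [Field K] [Ring A] [Algebra K A] [Ring H] [Bialgebra K H]
    (M : ModAlg K A H)
    (mul : (A ⊗[K] (A ⊗[K] H)) →ₗ[K] (A ⊗[K] (A ⊗[K] H)) →ₗ[K] (A ⊗[K] (A ⊗[K] H)))
    (hmul : XMulFormula K A H M.act mul) :
    ∀ x y z : A ⊗[K] (A ⊗[K] H), mul (mul x y) z = mul x (mul y z) := by
  intro x y z
  rw [hmul.mul_mul, Module.End.mul_apply]
end

section
/- The action (a ⊗ a′ ⊗ b)·a₀ = a(b a₀)a′ makes A into a left module over the crossed product algebra X = A ⊗ A ⊗ H. -/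
/-!
On pure tensors, `ρ(a₁ ⊗ a₁' ⊗ b¹) ρ(a₂ ⊗ a₂' ⊗ b²) a₀ = a₁ · b¹(a₂ (b²a₀) a₂') · a₁'`.
Expanding `b¹` over the product `a₂ ((b²a₀) a₂')` by the module-algebra axiom, twice, gives
`∑ a₁ (b¹₍₁₎a₂)(b¹₍₂₎b²a₀)(b¹₍₃₎a₂') a₁'`, with the Sweedler indices coming from
`(id ⊗ Δ) Δ`; since `b¹₍₂₎b²a₀ = b¹₍₂₎(b²a₀)`, this is `ρ` of the crossed product.
-/

open TensorProduct

theorem TensorProduct.ext_threefold'₂ {R M N P M' N' P' Q : Type*} [CommSemiring R]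
    [AddCommMonoid M] [AddCommMonoid N] [AddCommMonoid P] [AddCommMonoid M'] [AddCommMonoid N']
    [AddCommMonoid P'] [AddCommMonoid Q] [Module R M] [Module R N] [Module R P] [Module R M']
    [Module R N'] [Module R P'] [Module R Q]
    {B₁ B₂ : M ⊗[R] (N ⊗[R] P) →ₗ[R] M' ⊗[R] (N' ⊗[R] P') →ₗ[R] Q}
    (h : ∀ x y z x' y' z',
      B₁ (x ⊗ₜ (y ⊗ₜ z)) (x' ⊗ₜ (y' ⊗ₜ z')) = B₂ (x ⊗ₜ (y ⊗ₜ z)) (x' ⊗ₜ (y' ⊗ₜ z'))) :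
    B₁ = B₂ :=
  TensorProduct.ext_threefold' fun x y z => TensorProduct.ext_threefold' (h x y z)

namespace ModAlg

variable {K A H : Type u} [Field K] [Ring A] [Algebra K A] [Ring H] [Bialgebra K H]
  (M : ModAlg K A H)

def sweedlerMul (x y : A) : H ⊗[K] H →ₗ[K] A :=
  LinearMap.mul' K A ∘ₗ TensorProduct.map (M.act.flip x) (M.act.flip y)

def sweedlerMul₃ (x y z : A) : H ⊗[K] (H ⊗[K] H) →ₗ[K] A :=
  LinearMap.mul' K A ∘ₗ TensorProduct.map (M.act.flip x) (M.sweedlerMul y z)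

theorem act_mul_eq_sweedlerMul (b : H) (x y : A) :
    M.act b (x * y) = M.sweedlerMul x y (Coalgebra.comul b) := by
  rw [M.act_alg]
  induction Coalgebra.comul (R := K) b using TensorProduct.induction_on with
  | zero => simp
  | tmul u v => simp [sweedlerMul]
  | add w₁ w₂ h₁ h₂ => simp_all [map_add]

theorem act_mul_mul_eq_sweedlerMul₃ (b : H) (x y z : A) :
    M.act b (x * (y * z)) =
      M.sweedlerMul₃ x y z (LinearMap.lTensor H Coalgebra.comul (Coalgebra.comul b)) := by
  have h : M.act.flip (y * z) = M.sweedlerMul y z ∘ₗ Coalgebra.comul :=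
    LinearMap.ext fun b => M.act_mul_eq_sweedlerMul b y z
  rw [act_mul_eq_sweedlerMul, sweedlerMul, h, ← LinearMap.map_comp_lTensor]
  rfl

theorem rho_mul_tmul_apply
    {mul : (A ⊗[K] (A ⊗[K] H)) →ₗ[K] (A ⊗[K] (A ⊗[K] H)) →ₗ[K] (A ⊗[K] (A ⊗[K] H))}
    (hmul : XMulFormula K A H M.act mul) {ρ : (A ⊗[K] (A ⊗[K] H)) →ₗ[K] A →ₗ[K] A}
    (hρ : ∀ (a a' : A) (b : H) (a₀ : A), ρ (a ⊗ₜ[K] (a' ⊗ₜ[K] b)) a₀ = a * M.act b a₀ * a')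
    (a₁ a₁' : A) (b₁ : H) (a₂ a₂' : A) (b₂ : H) (a₀ : A) :
    ρ (mul (a₁ ⊗ₜ[K] (a₁' ⊗ₜ[K] b₁)) (a₂ ⊗ₜ[K] (a₂' ⊗ₜ[K] b₂))) a₀ =
      a₁ * M.sweedlerMul₃ a₂ (M.act b₂ a₀) a₂'
        (LinearMap.lTensor H Coalgebra.comul (Coalgebra.comul b₁)) * a₁' := by
  rw [hmul]
  refine LinearMap.congr_fun (f := ρ.flip a₀ ∘ₗ TensorProduct.map _ _)
    (g := LinearMap.mulRight K a₁' ∘ₗ LinearMap.mulLeft K a₁ ∘ₗ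
      M.sweedlerMul₃ a₂ (M.act b₂ a₀) a₂')
    (TensorProduct.ext_threefold' fun u v w => ?_) _
  simp [hρ, sweedlerMul₃, sweedlerMul, M.act_mul, mul_assoc]

end ModAlg

/-- The action `(a ⊗ a′ ⊗ b)·a₀ = a(b a₀)a′` makes `A` into a left module
over the crossed product algebra `X = A ⊗ A ⊗ H`. -/
theorem crossed_product_module_on_A
    {K A H : Type u} [Field K] [Ring A] [Algebra K A] [Ring H] [Bialgebra K H]
    (M : ModAlg K A H)
    (mul : (A ⊗[K] (A ⊗[K] H)) →ₗ[K] (A ⊗[K] (A ⊗[K] H)) →ₗ[K] (A ⊗[K] (A ⊗[K] H)))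
    (hmul : XMulFormula K A H M.act mul)
    (ρ : (A ⊗[K] (A ⊗[K] H)) →ₗ[K] A →ₗ[K] A)
    (hρ : ∀ (a a' : A) (b : H) (a₀ : A),
      ρ (a ⊗ₜ[K] (a' ⊗ₜ[K] b)) a₀ = a * M.act b a₀ * a') :
    ρ ((1 : A) ⊗ₜ[K] ((1 : A) ⊗ₜ[K] (1 : H))) = LinearMap.id ∧
    ∀ x y : A ⊗[K] (A ⊗[K] H), ρ (mul x y) = ρ x ∘ₗ ρ y := by
  refine ⟨LinearMap.ext fun a₀ => by simp [hρ, M.act_one], fun x y => ?_⟩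
  have hcomp : mul.compr₂ ρ = (LinearMap.llcomp K A A A ∘ₗ ρ).compl₂ ρ :=
    TensorProduct.ext_threefold'₂ fun a₁ a₁' b₁ a₂ a₂' b₂ => LinearMap.ext fun a₀ => by
      simp [M.rho_mul_tmul_apply hmul hρ, hρ, mul_assoc, M.act_mul_mul_eq_sweedlerMul₃]
  exact LinearMap.congr_fun₂ hcomp x y
end

section
/- The structure maps γ : C(k) ⊗ C(n₁) ⊗ ⋯ ⊗ C(n_k) → C(n₁ + ⋯ + n_k), defined by γ(f; g₁,…,g_k)(a₀ ⊗ ⋯ ⊗ a_{N+1}) = f(a₀ ⊗ g₁(1 ⊗ a_{1,n₁} ⊗ 1) ⊗ ⋯ ⊗ g_k(1 ⊗ a_{N_{k-1}+1,N_k} ⊗ 1) ⊗ a_{N+1}), are well-defined: γ(f; g₁,…,g_k) is again X-linear. -/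
open TensorProduct

/-!
`X` acts on `A^{⊗(m+2)}` by multiplying the first factor on the left, the last factor on the
right, and by `b` diagonally through the iterated coproduct. Now `γ(f; g₁, …, g_k)` is
`f ∘ (id_A ⊗ G)`, where `G` replaces consecutive blocks by `gᵢ(1 ⊗ - ⊗ 1)` and passes the last
factor through. The multiplications by `a` and `a'` only see factors that `G` leaves alone, and
`G` is `H`-equivariant: each `gᵢ(1 ⊗ - ⊗ 1)` is `H`-linear (`X`-linearity of `gᵢ` at `a = a' = 1`
together with `b · 1 = ε(b) 1`), and coassociativity splits the diagonal action on
`A^{⊗(S+n+2)}` into the actions on a block `A^{⊗(n+1)}` and on the rest. `X`-linearity of `f`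
then finishes the proof.
-/

noncomputable section HopfHochschildOperad

open LinearMap

universe u

variable {K A H : Type u} [Field K] [Ring A] [Algebra K A] [Ring H] [Bialgebra K H]

section tensorAct

variable {P P' Q Q' R : Type*}
  [AddCommGroup P] [Module K P] [AddCommGroup P'] [Module K P']
  [AddCommGroup Q] [Module K Q] [AddCommGroup Q'] [Module K Q']
  [AddCommGroup R] [Module K R]

/-- `tensorAct u v b = ∑ u b₍₁₎ ⊗ v b₍₂₎`. -/
def tensorAct (u : H →ₗ[K] P →ₗ[K] P') (v : H →ₗ[K] Q →ₗ[K] Q') :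
    H →ₗ[K] P ⊗[K] Q →ₗ[K] P' ⊗[K] Q' :=
  homTensorHomMap (RingHom.id K) P Q P' Q' ∘ₗ TensorProduct.map u v ∘ₗ Coalgebra.comul (R := K)

theorem tensorAct_apply (u : H →ₗ[K] P →ₗ[K] P') (v : H →ₗ[K] Q →ₗ[K] Q') (b : H) :
    tensorAct u v b =
      homTensorHomMap (RingHom.id K) P Q P' Q' (map u v (Coalgebra.comul (R := K) b)) :=
  rfl

theorem map_comp_tensorAct {u : H →ₗ[K] P →ₗ[K] P} {u' : H →ₗ[K] P' →ₗ[K] P'}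
    {v : H →ₗ[K] Q →ₗ[K] Q} {v' : H →ₗ[K] Q' →ₗ[K] Q'} {φ : P →ₗ[K] P'} {ψ : Q →ₗ[K] Q'}
    (hφ : ∀ c, φ ∘ₗ u c = u' c ∘ₗ φ) (hψ : ∀ c, ψ ∘ₗ v c = v' c ∘ₗ ψ) (b : H) :
    map φ ψ ∘ₗ tensorAct u v b = tensorAct u' v' b ∘ₗ map φ ψ := by
  suffices ∀ z : H ⊗[K] H, map φ ψ ∘ₗ homTensorHomMap (RingHom.id K) P Q P Q (map u v z) =
      homTensorHomMap (RingHom.id K) P' Q' P' Q' (map u' v' z) ∘ₗ map φ ψ from this _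
  intro z
  induction z using TensorProduct.induction_on with
  | zero => simp
  | tmul c d => simp only [map_tmul, homTensorHomMap_apply, ← map_comp, hφ, hψ]
  | add x y hx hy => simp only [map_add, add_comp, comp_add, hx, hy]

theorem lTensor_comp_tensorAct (u : H →ₗ[K] P →ₗ[K] P') (v : H →ₗ[K] Q →ₗ[K] Q')
    (φ : Q' →ₗ[K] R) (b : H) :
    lTensor P' φ ∘ₗ tensorAct u v b = tensorAct u (v.compr₂ φ) b := by
  suffices ∀ z : H ⊗[K] H, lTensor P' φ ∘ₗ homTensorHomMap (RingHom.id K) P Q P' Q' (map u v z) =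
      homTensorHomMap (RingHom.id K) P Q P' R (map u (v.compr₂ φ) z) from this _
  intro z
  induction z using TensorProduct.induction_on with
  | zero => simp
  | tmul c d =>
    simp only [map_tmul, homTensorHomMap_apply, lTensor, ← map_comp, id_comp]
    rfl
  | add x y hx hy => simp only [map_add, comp_add, hx, hy]

theorem assoc_symm_comp_tensorAct (u : H →ₗ[K] P →ₗ[K] P) (v : H →ₗ[K] Q →ₗ[K] Q)
    (w : H →ₗ[K] R →ₗ[K] R) (b : H) :
    (TensorProduct.assoc K P Q R).symm.toLinearMap ∘ₗ tensorAct u (tensorAct v w) b =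
      tensorAct (tensorAct u v) w b ∘ₗ (TensorProduct.assoc K P Q R).symm.toLinearMap := by
  suffices ∀ ζ : (H ⊗[K] H) ⊗[K] H,
      (TensorProduct.assoc K P Q R).symm.toLinearMap ∘ₗ homTensorHomMap (RingHom.id K) _ _ _ _
          (map u (homTensorHomMap (RingHom.id K) Q R Q R ∘ₗ map v w)
            (TensorProduct.assoc K H H H ζ)) =
        homTensorHomMap (RingHom.id K) _ _ _ _
          (map (homTensorHomMap (RingHom.id K) P Q P Q ∘ₗ map u v) w ζ) ∘ₗ
          (TensorProduct.assoc K P Q R).symm.toLinearMap by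
    have hl : tensorAct u (tensorAct v w) b = homTensorHomMap (RingHom.id K) _ _ _ _
        (map u (homTensorHomMap (RingHom.id K) Q R Q R ∘ₗ map v w)
          (lTensor H (Coalgebra.comul (R := K)) (Coalgebra.comul b))) := by
      rw [← comp_apply (map u _), map_comp_lTensor]; rfl
    have hr : tensorAct (tensorAct u v) w b = homTensorHomMap (RingHom.id K) _ _ _ _
        (map (homTensorHomMap (RingHom.id K) P Q P Q ∘ₗ map u v) w
          (rTensor H (Coalgebra.comul (R := K)) (Coalgebra.comul b))) := by
      rw [← comp_apply (map _ w), map_comp_rTensor]; rfl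
    rw [hl, hr, ← Coalgebra.coassoc_apply]
    exact this _
  intro ζ
  induction ζ using TensorProduct.induction_on with
  | zero => simp
  | tmul z d =>
    induction z using TensorProduct.induction_on with
    | zero => simp
    | tmul c e =>
      simp only [TensorProduct.assoc_tmul, map_tmul, comp_apply, homTensorHomMap_apply]
      exact (map_map_comp_assoc_symm_eq _ _ _).symm
    | add x y hx hy => simp only [add_tmul, map_add, add_comp, comp_add, hx, hy]
  | add x y hx hy => simp only [map_add, add_comp, comp_add, hx, hy]

theorem tensorAct_comp_mk {u : H →ₗ[K] P →ₗ[K] P} {p : P}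
    (hp : ∀ c, u c p = Coalgebra.counit (R := K) c • p) (v : H →ₗ[K] Q →ₗ[K] Q') (b : H) :
    tensorAct u v b ∘ₗ TensorProduct.mk K P Q p = TensorProduct.mk K P Q' p ∘ₗ v b := by
  suffices ∀ z : H ⊗[K] H, homTensorHomMap (RingHom.id K) P Q P Q' (map u v z) ∘ₗ
      TensorProduct.mk K P Q p =
        TensorProduct.mk K P Q' p ∘ₗ v (TensorProduct.lid K H (rTensor H Coalgebra.counit z)) by
    simpa [tensorAct_apply, Coalgebra.rTensor_counit_comul] using this (Coalgebra.comul b)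
  intro z
  induction z using TensorProduct.induction_on with
  | zero => simp
  | tmul c d =>
    ext q
    simp [hp, smul_tmul]
  | add x y hx hy => simp only [map_add, add_comp, comp_add, hx, hy]

theorem tensorAct_comp_mk_flip (u : H →ₗ[K] P →ₗ[K] P') {v : H →ₗ[K] Q →ₗ[K] Q} {q : Q}
    (hq : ∀ c, v c q = Coalgebra.counit (R := K) c • q) (b : H) :
    tensorAct u v b ∘ₗ (TensorProduct.mk K P Q).flip q =
      (TensorProduct.mk K P' Q).flip q ∘ₗ u b := by
  suffices ∀ z : H ⊗[K] H, homTensorHomMap (RingHom.id K) P Q P' Q (map u v z) ∘ₗ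
      (TensorProduct.mk K P Q).flip q =
        (TensorProduct.mk K P' Q).flip q ∘ₗ
          u (TensorProduct.rid K H (lTensor H Coalgebra.counit z)) by
    simpa [tensorAct_apply, Coalgebra.lTensor_counit_comul] using this (Coalgebra.comul b)
  intro z
  induction z using TensorProduct.induction_on with
  | zero => simp
  | tmul c d =>
    ext p
    simp [hq, smul_tmul']
  | add x y hx hy => simp only [map_add, add_comp, comp_add, hx, hy]

end tensorAct


variable (K A) in
/-- The regrouping `A^{⊗(S+n+2)} ≅ A^{⊗(n+1)} ⊗ A^{⊗(S+1)}`. -/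
def tpowSplit : ∀ n S : ℕ, Tpow K A (S + n + 1) →ₗ[K] Tpow K A n ⊗[K] Tpow K A S
  | 0, _ => LinearMap.id
  | n + 1, S => (TensorProduct.assoc K A (Tpow K A n) (Tpow K A S)).symm.toLinearMap ∘ₗ
      lTensor A (tpowSplit n S)

theorem consume_eq_rTensor_comp_tpowSplit : ∀ (n S : ℕ) (φ : Tpow K A n →ₗ[K] A),
    consume K A n S φ = rTensor (Tpow K A S) φ ∘ₗ tpowSplit K A n S
  | 0, _, _ => rfl
  | n + 1, S, φ => by
    refine TensorProduct.ext' fun x s => ?_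
    show consume K A n S (TensorProduct.lcurry (RingHom.id K) A (Tpow K A n) A φ x) s = _
    rw [consume_eq_rTensor_comp_tpowSplit n S]
    have hcurry : rTensor (Tpow K A S) (TensorProduct.lcurry (RingHom.id K) A (Tpow K A n) A φ x) =
        rTensor (Tpow K A S) φ ∘ₗ
          (TensorProduct.assoc K A (Tpow K A n) (Tpow K A S)).symm.toLinearMap ∘ₗ
            TensorProduct.mk K A _ x :=
      TensorProduct.ext' fun _ _ => rfl
    exact LinearMap.congr_fun hcurry _

section diagAct

variable (act : H →ₗ[K] A →ₗ[K] A)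

/-- Taking `ρ = act.compr₂ (mulRight K a')` absorbs the right multiplication of `xActP` into the
action on the last factor, so one equivariance statement covers both. -/
def diagAct (ρ : H →ₗ[K] A →ₗ[K] A) : ∀ n : ℕ, H →ₗ[K] Tpow K A n →ₗ[K] Tpow K A n
  | 0 => ρ
  | n + 1 => tensorAct act (diagAct ρ n)

theorem tact_comp_itComul : ∀ n : ℕ, tact K A H act n ∘ₗ itComul K H n = diagAct act act n
  | 0 => rfl
  | n + 1 => by
    ext1 b
    rw [diagAct, ← tact_comp_itComul n]
    show homTensorHomMap (RingHom.id K) A (Tpow K A n) A (Tpow K A n)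
        (map act (tact K A H act n) (lTensor H (itComul K H n) (Coalgebra.comul b))) = _
    rw [← comp_apply (map act _), map_comp_lTensor]
    rfl

theorem rmulL_comp_diagAct (ρ : H →ₗ[K] A →ₗ[K] A) (a' : A) :
    ∀ (n : ℕ) (b : H), rmulL K A n a' ∘ₗ diagAct act ρ n b =
      diagAct act (ρ.compr₂ (mulRight K a')) n b
  | 0, b => rfl
  | n + 1, b => by
    refine (lTensor_comp_tensorAct act (diagAct act ρ n) (rmulL K A n a') b).trans ?_
    congr 2
    ext1 c
    exact rmulL_comp_diagAct ρ a' n c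

theorem xActP_eq_lmulL_comp_diagAct (n : ℕ) (a a' : A) (b : H) :
    xActP K A H act n a a' b = lmulL K A n a ∘ₗ diagAct act (act.compr₂ (mulRight K a')) n b := by
  rw [xActP, ← rmulL_comp_diagAct, ← tact_comp_itComul]
  rfl

theorem lmulL_one : ∀ n : ℕ, lmulL K A n 1 = LinearMap.id
  | 0 => LinearMap.ext fun x : A => one_mul x
  | n + 1 => by
    show rTensor (Tpow K A n) (mulLeft K (1 : A)) = LinearMap.id
    rw [mulLeft_one, rTensor_id]

variable {act}

theorem IsXLinear.map_diagAct {m : ℕ} {g : Tpow K A (m + 1) →ₗ[K] A}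
    (hg : IsXLinear K A H act m g) (b : H) (t : Tpow K A (m + 1)) :
    g (diagAct act act (m + 1) b t) = act b (g t) := by
  have hρ : act.compr₂ (mulRight K (1 : A)) = act := by
    ext c x
    exact mul_one (act c x)
  have h := hg 1 1 b t
  rwa [xActP_eq_lmulL_comp_diagAct, hρ, lmulL_one, one_mul, mul_one] at h

theorem diagAct_comp_mk_one
    (hact : ∀ c : H, act c 1 = Coalgebra.counit (R := K) c • (1 : A))
    (ρ : H →ₗ[K] A →ₗ[K] A) (n : ℕ) (b : H) :
    diagAct act ρ (n + 1) b ∘ₗ TensorProduct.mk K A (Tpow K A n) 1 =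
      TensorProduct.mk K A (Tpow K A n) 1 ∘ₗ diagAct act ρ n b :=
  tensorAct_comp_mk hact _ b

theorem diagAct_comp_appendA_one
    (hact : ∀ c : H, act c 1 = Coalgebra.counit (R := K) c • (1 : A)) :
    ∀ (n : ℕ) (b : H),
    diagAct act act (n + 1) b ∘ₗ appendA K A n 1 = appendA K A n 1 ∘ₗ diagAct act act n b
  | 0, b => tensorAct_comp_mk_flip act hact b
  | n + 1, b => (map_comp_tensorAct (φ := LinearMap.id) (fun _ => rfl)
      (fun c => (diagAct_comp_appendA_one hact n c).symm) b).symm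

theorem innerC_comp_diagAct
    (hact : ∀ c : H, act c 1 = Coalgebra.counit (R := K) c • (1 : A))
    {n : ℕ} {g : Tpow K A (n + 2) →ₗ[K] A} (hg : IsXLinear K A H act (n + 1) g) (b : H) :
    innerC K A g ∘ₗ diagAct act act n b = act b ∘ₗ innerC K A g := by
  ext t
  set s := TensorProduct.mk K A (Tpow K A (n + 1)) 1
  have happend : appendA K A n 1 (diagAct act act n b t) =
      diagAct act act (n + 1) b (appendA K A n 1 t) :=
    (LinearMap.congr_fun (diagAct_comp_appendA_one hact n b) t).symm
  have hmk : s (diagAct act act (n + 1) b (appendA K A n 1 t)) =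
      diagAct act act (n + 1 + 1) b (s (appendA K A n 1 t)) :=
    (LinearMap.congr_fun (diagAct_comp_mk_one hact act (n + 1) b) _).symm
  calc g (s (appendA K A n 1 (diagAct act act n b t)))
      = g (diagAct act act (n + 1 + 1) b (s (appendA K A n 1 t))) := by rw [happend, hmk]
    _ = act b (g (s (appendA K A n 1 t))) := hg.map_diagAct b _

end diagAct

section equivariance

variable {act : H →ₗ[K] A →ₗ[K] A} (ρ : H →ₗ[K] A →ₗ[K] A)

theorem tpowSplit_comp_diagAct : ∀ (n S : ℕ) (b : H),
    tpowSplit K A n S ∘ₗ diagAct act ρ (S + n + 1) b =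
      tensorAct (diagAct act act n) (diagAct act ρ S) b ∘ₗ tpowSplit K A n S
  | 0, _, _ => rfl
  | n + 1, S, b => by
    have hsplit := map_comp_tensorAct (u := act) (φ := LinearMap.id) (fun _ => rfl)
      (fun c => tpowSplit_comp_diagAct n S c) b
    calc (TensorProduct.assoc K A (Tpow K A n) (Tpow K A S)).symm.toLinearMap ∘ₗ
          lTensor A (tpowSplit K A n S) ∘ₗ tensorAct act (diagAct act ρ (S + n + 1)) b
        = (TensorProduct.assoc K A (Tpow K A n) (Tpow K A S)).symm.toLinearMap ∘ₗ
          tensorAct act (tensorAct (diagAct act act n) (diagAct act ρ S)) b ∘ₗ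
            lTensor A (tpowSplit K A n S) := congrArg _ hsplit
      _ = tensorAct (tensorAct act (diagAct act act n)) (diagAct act ρ S) b ∘ₗ
          (TensorProduct.assoc K A (Tpow K A n) (Tpow K A S)).symm.toLinearMap ∘ₗ
            lTensor A (tpowSplit K A n S) := by
        rw [← comp_assoc, assoc_symm_comp_tensorAct, comp_assoc]

theorem consume_comp_diagAct {n : ℕ} (S : ℕ) {φ : Tpow K A n →ₗ[K] A}
    (hφ : ∀ c, φ ∘ₗ diagAct act act n c = act c ∘ₗ φ) (b : H) :
    consume K A n S φ ∘ₗ diagAct act ρ (S + n + 1) b =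
      diagAct act ρ (S + 1) b ∘ₗ consume K A n S φ := by
  rw [consume_eq_rTensor_comp_tpowSplit]
  calc (rTensor (Tpow K A S) φ ∘ₗ tpowSplit K A n S) ∘ₗ diagAct act ρ (S + n + 1) b
      = (rTensor (Tpow K A S) φ ∘ₗ tensorAct (diagAct act act n) (diagAct act ρ S) b) ∘ₗ
          tpowSplit K A n S := by
        rw [comp_assoc, tpowSplit_comp_diagAct, comp_assoc]
    _ = tensorAct act (diagAct act ρ S) b ∘ₗ rTensor (Tpow K A S) φ ∘ₗ tpowSplit K A n S :=
        congrArg (· ∘ₗ _) (map_comp_tensorAct hφ (fun _ => rfl) b)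

theorem gammaAux_comp_diagAct (hact : ∀ c : H, act c 1 = Coalgebra.counit (R := K) c • (1 : A)) :
    ∀ l : List (Entry K A), (∀ e ∈ l, IsXLinear K A H act e.1 e.2) → ∀ b : H,
      gammaAux K A l ∘ₗ diagAct act ρ (sumA K A l) b = diagAct act ρ l.length b ∘ₗ gammaAux K A l
  | [], _, _ => rfl
  | ⟨0, _⟩ :: _, _, _ => by rw [gammaAux, zero_comp, comp_zero]
  | ⟨n + 1, g⟩ :: l, hl, b => by
    have ih := gammaAux_comp_diagAct hact l (fun e he => hl e (List.mem_cons_of_mem _ he))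
    have hg := innerC_comp_diagAct hact (hl _ List.mem_cons_self)
    calc lTensor A (gammaAux K A l) ∘ₗ consume K A n (sumA K A l) (innerC K A g) ∘ₗ
          diagAct act ρ (sumA K A l + n + 1) b
        = (lTensor A (gammaAux K A l) ∘ₗ tensorAct act (diagAct act ρ (sumA K A l)) b) ∘ₗ
          consume K A n (sumA K A l) (innerC K A g) :=
        congrArg _ (consume_comp_diagAct ρ _ hg b)
      _ = (tensorAct act (diagAct act ρ l.length) b ∘ₗ lTensor A (gammaAux K A l)) ∘ₗ
          consume K A n (sumA K A l) (innerC K A g) :=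
        congrArg (· ∘ₗ _) (map_comp_tensorAct (fun _ => rfl) ih b)

end equivariance

theorem IsXLinear.comp_lTensor {act : H →ₗ[K] A →ₗ[K] A} {m n : ℕ}
    {f : Tpow K A (n + 1) →ₗ[K] A} (hf : IsXLinear K A H act n f) {G : Tpow K A m →ₗ[K] Tpow K A n}
    (hG : ∀ (a' : A) (b : H), G ∘ₗ diagAct act (act.compr₂ (mulRight K a')) m b =
      diagAct act (act.compr₂ (mulRight K a')) n b ∘ₗ G) :
    IsXLinear K A H act m (f ∘ₗ lTensor A G) := by
  intro a a' b t
  set ρ := act.compr₂ (mulRight K a')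
  have hlmul : ∀ x, lTensor A G (lmulL K A (m + 1) a x) = lmulL K A (n + 1) a (lTensor A G x) :=
    LinearMap.congr_fun ((LinearMap.lTensor_comp_rTensor A (mulLeft K a) G).trans
      (LinearMap.rTensor_comp_lTensor A (mulLeft K a) G).symm)
  have hdiag : lTensor A G (diagAct act ρ (m + 1) b t) = diagAct act ρ (n + 1) b (lTensor A G t) :=
    LinearMap.congr_fun
      (map_comp_tensorAct (u := act) (φ := LinearMap.id) (fun _ => rfl) (hG a') b) t
  calc (f ∘ₗ lTensor A G) (xActP K A H act (m + 1) a a' b t)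
      = f (lTensor A G (lmulL K A (m + 1) a (diagAct act ρ (m + 1) b t))) := by
        rw [xActP_eq_lmulL_comp_diagAct]; rfl
    _ = f (xActP K A H act (n + 1) a a' b (lTensor A G t)) := by
        rw [hlmul, hdiag, xActP_eq_lmulL_comp_diagAct]; rfl
    _ = a * act b (f (lTensor A G t)) * a' := hf a a' b _

theorem tmap_self (m : ℕ) : tmap K A m m = LinearMap.id := by
  simp [tmap]

end HopfHochschildOperad

theorem gamma_well_defined_general
    {K A H : Type u} [Field K] [Ring A] [Algebra K A] [Ring H] [Bialgebra K H]
    (M : ModAlg K A H) (k : ℕ)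
    (f : Tpow K A (k + 1) →ₗ[K] A) (hf : IsXLinear K A H M.act k f)
    (l : List (Entry K A)) (hl : l.length = k)
    (hXl : ∀ e ∈ l, 1 ≤ e.1 ∧ IsXLinear K A H M.act e.1 e.2) :
    IsXLinear K A H M.act (sumA K A l)
      (gammaD K A k f l (sumA K A l + 1)) := by
  subst hl
  rw [gammaD, tmap_self, tmap_self, LinearMap.comp_id, LinearMap.comp_id]
  exact hf.comp_lTensor fun _ =>
    gammaAux_comp_diagAct _ M.act_unit l fun e he => (hXl e he).2

/-- The operad structure maps `γ` of the Hopf-Hochschild cochain complex are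
well defined: if `f ∈ C(k)` and `g₁, …, g_k` are `X`-linear cochains (of positive degrees),
then `γ(f; g₁, …, g_k)` is again `X`-linear. -/
theorem gamma_well_defined
    {K A H : Type u} [Field K] [Ring A] [Algebra K A] [Ring H] [Bialgebra K H]
    (M : ModAlg K A H) (k : ℕ) (hk : 1 ≤ k)
    (f : Tpow K A (k + 1) →ₗ[K] A) (hf : IsXLinear K A H M.act k f)
    (l : List (Entry K A)) (hl : l.length = k)
    (hXl : ∀ e ∈ l, 1 ≤ e.1 ∧ IsXLinear K A H M.act e.1 e.2) :
    IsXLinear K A H M.act (sumA K A l)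
      (gammaD K A k f l (sumA K A l + 1)) :=
  gamma_well_defined_general M k f hf l hl hXl
end
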